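/- For a matrix A : C × C → ℂ, the torsion-free condition for the spin connection with components A (with respect to the Maurer–Cartan framing and the braided-Killing metric) reads: for every a ∈ C, the vector Σ_{b,c∈C} A(b,c)·[(c, bab) − (c, a)] + Σ_{b∈C} [(b,a) + (a,b)] lies in K. This holds if and only if there exist α, β, γ ∈ ℂ with α + β + γ = −1 such that A(u,u) = α+1, A(u,v) = γ, A(u,w) = β, A(v,u) = γ, A(v,v) = β+1, A(v,w) = α, A(w,u) = β, A(w,v) = α, A(w,w) = γ+1. In particular every torsion-free A satisfies Σ_{b∈C} A(b,c) = 0 for each c ∈ C, and the solution set is a 2-dimensional affine subspace of ℂ^{C×C} (so the moduli of function-valued torsion-free spin connections on S₃ is 12-dimensional). -/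
import Mathlib


/-! Setup for `S₃`: `u = (12)`, `v = (23)`, `w = uvu = (13)`, the conjugacy class
`C = {u,v,w}` of transpositions (each `a ∈ C` has `a² = e`, so `b⁻¹ab = bab`),
the vector space `V` with basis `{(a,b) : a,b ∈ C}` (functions `C × C → ℂ`),
the braiding `Ψ(a,b) = (aba⁻¹, a)` and `K = ker(id − Ψ)`. -/

def pu : Equiv.Perm (Fin 3) := Equiv.swap 0 1
def pv : Equiv.Perm (Fin 3) := Equiv.swap 1 2
def pw : Equiv.Perm (Fin 3) := pu * pv * pu

def C3 : Finset (Equiv.Perm (Fin 3)) := {pu, pv, pw}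

lemma mem_conj3 : ∀ d c : {x // x ∈ C3},
    (d : Equiv.Perm (Fin 3))⁻¹ * c * d ∈ C3 := by decide

lemma mem_bab : ∀ b a : {x // x ∈ C3},
    (b : Equiv.Perm (Fin 3)) * a * b ∈ C3 := by decide

lemma mem_pu : pu ∈ C3 := by decide
lemma mem_pv : pv ∈ C3 := by decide
lemma mem_pw : pw ∈ C3 := by decide

def cu : {x // x ∈ C3} := ⟨pu, mem_pu⟩
def cv : {x // x ∈ C3} := ⟨pv, mem_pv⟩
def cw : {x // x ∈ C3} := ⟨pw, mem_pw⟩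

/-- `bab = b⁻¹ab` for `a, b` in the class of transpositions. -/
def conjE (b a : {x // x ∈ C3}) : {x // x ∈ C3} :=
  ⟨(b : Equiv.Perm (Fin 3)) * a * b, mem_bab b a⟩

def bvec (a b : {x // x ∈ C3}) : {x // x ∈ C3} × {x // x ∈ C3} → ℂ :=
  fun p => if p = (a, b) then 1 else 0

noncomputable def Psi3 :
    ({x // x ∈ C3} × {x // x ∈ C3} → ℂ) →ₗ[ℂ] ({x // x ∈ C3} × {x // x ∈ C3} → ℂ) where
  toFun f p := f (p.2, ⟨(p.2 : Equiv.Perm (Fin 3))⁻¹ * p.1 * p.2, mem_conj3 p.2 p.1⟩)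
  map_add' _ _ := rfl
  map_smul' _ _ := rfl

noncomputable def K3 : Submodule ℂ ({x // x ∈ C3} × {x // x ∈ C3} → ℂ) :=
  LinearMap.ker (LinearMap.id - Psi3)

/-- The torsion-free condition for a constant spin connection with components `A`:
for all `a ∈ C`, `Σ_{b,c} A(b,c)·[(c,bab) − (c,a)] + Σ_b [(b,a) + (a,b)] ∈ K`. -/
noncomputable def TorsionFreeConst (A : {x // x ∈ C3} × {x // x ∈ C3} → ℂ) : Prop :=
  ∀ a : {x // x ∈ C3},
    ((∑ b : {x // x ∈ C3}, ∑ c : {x // x ∈ C3},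
        A (b, c) • (bvec c (conjE b a) - bvec c a)) +
      ∑ b : {x // x ∈ C3}, (bvec b a + bvec a b)) ∈ K3

/- ## Auxiliary material -/

lemma univ3 : ∀ a : {x // x ∈ C3}, a = cu ∨ a = cv ∨ a = cw := by decide
lemma univ_eq : (Finset.univ : Finset {x // x ∈ C3}) = {cu, cv, cw} := by decide
lemma key3 : ∀ x y : {x // x ∈ C3},
    (⟨(y : Equiv.Perm (Fin 3))⁻¹ * x * y, mem_conj3 y x⟩ : {x // x ∈ C3}) = conjE y x := by
  decide
lemma cuu : conjE cu cu = cu := by decide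
lemma cuv : conjE cu cv = cw := by decide
lemma cuw : conjE cu cw = cv := by decide
lemma cvu : conjE cv cu = cw := by decide
lemma cvv : conjE cv cv = cv := by decide
lemma cvw : conjE cv cw = cu := by decide
lemma cwu : conjE cw cu = cv := by decide
lemma cwv : conjE cw cv = cu := by decide
lemma cww : conjE cw cw = cw := by decide
lemma nuv : cu ≠ cv := by decide
lemma nuw : cu ≠ cw := by decide
lemma nvu : cv ≠ cu := by decide
lemma nvw : cv ≠ cw := by decide
lemma nwu : cw ≠ cu := by decide
lemma nwv : cw ≠ cv := by decide

lemma sum3 {M : Type*} [AddCommMonoid M] (f : {x // x ∈ C3} → M) :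
    ∑ b, f b = f cu + f cv + f cw := by
  rw [univ_eq, Finset.sum_insert (by decide), Finset.sum_insert (by decide),
    Finset.sum_singleton, add_assoc]

lemma mem_K3_iff (f : {x // x ∈ C3} × {x // x ∈ C3} → ℂ) :
    f ∈ K3 ↔ ∀ x y : {x // x ∈ C3}, f (x, y) = f (y, conjE y x) := by
  rw [K3, LinearMap.mem_ker, LinearMap.sub_apply, LinearMap.id_apply, sub_eq_zero, funext_iff]
  constructor
  · intro h x y
    have := h (x, y)
    rwa [show (Psi3 f) (x, y) = f (y, conjE y x) by
      rw [show (Psi3 f) (x, y) = f (y, ⟨_, mem_conj3 y x⟩) from rfl, key3]] at this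
  · intro h p
    obtain ⟨x, y⟩ := p
    rw [show (Psi3 f) (x, y) = f (y, ⟨_, mem_conj3 y x⟩) from rfl, key3]
    exact h x y

/-- The parametric characterisation of torsion-free constant connections. -/
lemma tf_param_iff (A : {x // x ∈ C3} × {x // x ∈ C3} → ℂ) :
    TorsionFreeConst A ↔ ∃ α β γ : ℂ, α + β + γ = -1 ∧
      A (cu, cu) = α + 1 ∧ A (cu, cv) = γ ∧ A (cu, cw) = β ∧
      A (cv, cu) = γ ∧ A (cv, cv) = β + 1 ∧ A (cv, cw) = α ∧
      A (cw, cu) = β ∧ A (cw, cv) = α ∧ A (cw, cw) = γ + 1 := by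
  constructor
  · intro h
    have h' : ∀ a x y : {x // x ∈ C3},
        ((∑ b : {x // x ∈ C3}, ∑ c : {x // x ∈ C3},
            A (b, c) • (bvec c (conjE b a) - bvec c a)) +
          ∑ b : {x // x ∈ C3}, (bvec b a + bvec a b)) (x, y) =
        ((∑ b : {x // x ∈ C3}, ∑ c : {x // x ∈ C3},
            A (b, c) • (bvec c (conjE b a) - bvec c a)) +
          ∑ b : {x // x ∈ C3}, (bvec b a + bvec a b)) (y, conjE y x) :=
      fun a => (mem_K3_iff _).mp (h a)
    have q1 := h' cv cv cu
    have q2 := h' cv cv cw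
    have q3 := h' cv cw cv
    have q4 := h' cu cu cw
    have q5 := h' cu cw cv
    have q6 := h' cw cw cu
    have q7 := h' cv cw cu
    simp only [sum3, cuu, cuv, cuw, cvu, cvv, cvw, cwu, cwv, cww,
      Pi.add_apply, Pi.smul_apply, Pi.sub_apply, smul_eq_mul, bvec,
      Prod.mk.injEq, nuv, nuw, nvu, nvw, nwu, nwv] at q1 q2 q3 q4 q5 q6 q7
    norm_num at q1 q2 q3 q4 q5 q6 q7
    refine ⟨A (cw, cv), -A (cw, cv) - A (cw, cw), A (cw, cw) - 1, by ring,
      ?_, ?_, ?_, ?_, ?_, ?_, ?_, by ring, by ring⟩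
    · linear_combination -q1
    · linear_combination q2
    · linear_combination -q3
    · linear_combination q4
    · linear_combination q5
    · linear_combination q6 - q1
    · linear_combination q7 + q1
  · rintro ⟨α, β, γ, hs, huu, huv, huw, hvu, hvv, hvw, hwu, hwv, hww⟩
    intro a
    rw [mem_K3_iff]
    intro x y
    rcases univ3 a with rfl | rfl | rfl <;> rcases univ3 x with rfl | rfl | rfl <;>
        rcases univ3 y with rfl | rfl | rfl <;>
      simp only [sum3, cuu, cuv, cuw, cvu, cvv, cvw, cwu, cwv, cww,
        Pi.add_apply, Pi.smul_apply, Pi.sub_apply, smul_eq_mul, bvec,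
        Prod.mk.injEq, nuv, nuw, nvu, nvw, nwu, nwv, huu, huv, huw, hvu, hvv, hvw,
        hwu, hwv, hww] <;>
      norm_num <;>
      first
        | rfl
        | linear_combination hs
        | linear_combination -hs

def tA0 : {x // x ∈ C3} × {x // x ∈ C3} → ℂ := fun p =>
  if p = (cu, cu) then 1 else if p = (cu, cv) then -1 else
  if p = (cv, cu) then -1 else if p = (cv, cv) then 1 else 0

def tB1 : {x // x ∈ C3} × {x // x ∈ C3} → ℂ := fun p =>
  if p = (cu, cu) then 1 else if p = (cu, cv) then -1 else
  if p = (cv, cu) then -1 else if p = (cv, cw) then 1 else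
  if p = (cw, cv) then 1 else if p = (cw, cw) then -1 else 0

def tB2 : {x // x ∈ C3} × {x // x ∈ C3} → ℂ := fun p =>
  if p = (cu, cv) then -1 else if p = (cu, cw) then 1 else
  if p = (cv, cu) then -1 else if p = (cv, cv) then 1 else
  if p = (cw, cu) then 1 else if p = (cw, cw) then -1 else 0

/-- A constant connection matrix `A` is torsion free iff it has
the stated form with parameters `α, β, γ` summing to `−1`; in particular every
torsion-free `A` has columns summing to zero, and the solution set is a
2-dimensional affine subspace of `ℂ^{C×C}` (so the moduli of function-valued
torsion-free spin connections on `S₃` is 12-dimensional). -/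
theorem S3_torsion_free_moduli :
    (∀ A : {x // x ∈ C3} × {x // x ∈ C3} → ℂ,
      TorsionFreeConst A ↔ ∃ α β γ : ℂ, α + β + γ = -1 ∧
        A (cu, cu) = α + 1 ∧ A (cu, cv) = γ ∧ A (cu, cw) = β ∧
        A (cv, cu) = γ ∧ A (cv, cv) = β + 1 ∧ A (cv, cw) = α ∧
        A (cw, cu) = β ∧ A (cw, cv) = α ∧ A (cw, cw) = γ + 1) ∧
    (∀ A : {x // x ∈ C3} × {x // x ∈ C3} → ℂ, TorsionFreeConst A →
      ∀ c : {x // x ∈ C3}, ∑ b : {x // x ∈ C3}, A (b, c) = 0) ∧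
    (∃ (A₀ B₁ B₂ : {x // x ∈ C3} × {x // x ∈ C3} → ℂ),
      LinearIndependent ℂ ![B₁, B₂] ∧
      {A | TorsionFreeConst A} =
        {A | ∃ s t : ℂ, A = A₀ + s • B₁ + t • B₂}) := by
  refine ⟨tf_param_iff, ?_, ?_⟩
  · intro A hA c
    obtain ⟨α, β, γ, hs, huu, huv, huw, hvu, hvv, hvw, hwu, hwv, hww⟩ :=
      (tf_param_iff A).mp hA
    rcases univ3 c with rfl | rfl | rfl <;>
      rw [show (∑ b : {x // x ∈ C3}, A (b, _)) = _ from sum3 _] <;>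
      simp only [huu, huv, huw, hvu, hvv, hvw, hwu, hwv, hww] <;>
      linear_combination hs
  · refine ⟨tA0, tB1, tB2, ?_, ?_⟩
    · rw [LinearIndependent.pair_iff]
      intro s t hst
      have h1 := congrFun hst (cu, cu)
      have h2 := congrFun hst (cu, cw)
      simp only [tB1, tB2, Pi.add_apply, Pi.smul_apply, Pi.zero_apply, smul_eq_mul,
        Prod.mk.injEq, nuv, nuw, nvu, nvw, nwu, nwv] at h1 h2
      norm_num at h1 h2
      exact ⟨h1, h2⟩
    · ext A
      simp only [Set.mem_setOf_eq, tf_param_iff]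
      constructor
      · rintro ⟨α, β, γ, hs, huu, huv, huw, hvu, hvv, hvw, hwu, hwv, hww⟩
        refine ⟨α, β, ?_⟩
        funext p
        obtain ⟨x, y⟩ := p
        rcases univ3 x with rfl | rfl | rfl <;> rcases univ3 y with rfl | rfl | rfl <;>
          simp only [tA0, tB1, tB2, Pi.add_apply, Pi.smul_apply, smul_eq_mul,
            Prod.mk.injEq, nuv, nuw, nvu, nvw, nwu, nwv, huu, huv, huw, hvu, hvv, hvw,
            hwu, hwv, hww] <;>
          norm_num <;>
          first
            | rfl
            | ring1
            | linear_combination hs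
            | linear_combination -hs
      · rintro ⟨s, t, rfl⟩
        refine ⟨s, t, -1 - s - t, by ring, ?_, ?_, ?_, ?_, ?_, ?_, ?_, ?_, ?_⟩ <;>
          simp only [tA0, tB1, tB2, Pi.add_apply, Pi.smul_apply, smul_eq_mul,
            Prod.mk.injEq, nuv, nuw, nvu, nvw, nwu, nwv] <;>
          norm_num <;>
          ring
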